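/- arXiv:2007.13125 — 2 statements merged into one kernel-verified Lean document; each statement's English description precedes it below -/
import Mathlib

section
/- There exists a constant c > 0 depending only on α ∈ (0,1) such that for all n ≥ 1 and j ≥ 0, Σ_{i=1}^n (n-i+1)^{α-1} (j+i)^{-1} ≤ c n^{α-1} log(n+1). -/
/-!
Bounding `(j + i)⁻¹ ≤ i⁻¹` and `(n - i + 1) ^ α ≤ n ^ α` (as `α ≥ 0`) reduces each term to
`n ^ α / (i (n + 1 - i))`. The partial fraction decomposition
`1 / (i (n + 1 - i)) = (1 / i + 1 / (n + 1 - i)) / (n + 1)` and reflection `i ↦ n + 1 - i` sum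
these to `2 n ^ α H_n / (n + 1) ≤ 2 n ^ (α - 1) H_n`, and `H_n ≤ 1 + log n ≤ 3 log (n + 1)`.
-/

open Finset Real

theorem Finset.sum_Icc_one_reflect {M : Type*} [AddCommMonoid M] (f : ℕ → M) (n : ℕ) :
    ∑ i ∈ Icc 1 n, f (n + 1 - i) = ∑ i ∈ Icc 1 n, f i :=
  sum_nbij' (n + 1 - ·) (n + 1 - ·) (by intro i; simp; omega) (by intro i; simp; omega)
    (by intro i; simp; omega) (by intro i; simp; omega) (fun _ _ => rfl)

theorem sum_Icc_inv_mul_reflect_eq_harmonic (n : ℕ) :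
    ∑ i ∈ Icc 1 n, ((i : ℝ) * ((n : ℝ) - i + 1))⁻¹ = 2 * harmonic n / (n + 1) := by
  have partial_fraction : ∀ i ∈ Icc 1 n,
      ((i : ℝ) * ((n : ℝ) - i + 1))⁻¹ = ((i : ℝ)⁻¹ + ((n + 1 - i : ℕ) : ℝ)⁻¹) / (n + 1) := by
    intro i hi
    obtain ⟨hi1, hin⟩ := mem_Icc.mp hi
    have hi0 : (i : ℝ) ≠ 0 := by positivity
    have hk : (n : ℝ) - i + 1 ≠ 0 := by
      have : (i : ℝ) ≤ n := by exact_mod_cast hin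
      linarith
    rw [Nat.cast_sub (by omega)]
    push_cast
    rw [add_sub_right_comm]
    field_simp
    ring
  rw [sum_congr rfl partial_fraction, ← sum_div, sum_add_distrib,
    sum_Icc_one_reflect (fun k : ℕ => (k : ℝ)⁻¹), harmonic_eq_sum_Icc]
  push_cast
  ring

theorem harmonic_le_three_mul_log_add_one {n : ℕ} (hn : 1 ≤ n) :
    (harmonic n : ℝ) ≤ 3 * log (n + 1) := by
  have hn0 : (0 : ℝ) < n := by exact_mod_cast hn
  have hlog : log n ≤ log (n + 1) := log_le_log hn0 (by linarith)
  have hlog2 : log 2 ≤ log (n + 1) := log_le_log two_pos (by exact_mod_cast Nat.succ_le_succ hn)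
  linarith [harmonic_le_one_add_log n, log_two_gt_d9]

theorem rpow_sub_one_mul_inv_le_rpow_mul_inv_mul {α : ℝ} (hα : 0 ≤ α) {n i : ℕ}
    (hi : i ∈ Icc 1 n) (j : ℕ) :
    ((n : ℝ) - i + 1) ^ (α - 1) * ((j : ℝ) + i)⁻¹ ≤
      (n : ℝ) ^ α * ((i : ℝ) * ((n : ℝ) - i + 1))⁻¹ := by
  obtain ⟨hi1, hin⟩ := mem_Icc.mp hi
  have hi1' : (1 : ℝ) ≤ i := by exact_mod_cast hi1
  have hin' : (i : ℝ) ≤ n := by exact_mod_cast hin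
  have hk : (0 : ℝ) < n - i + 1 := by linarith
  calc ((n : ℝ) - i + 1) ^ (α - 1) * ((j : ℝ) + i)⁻¹
      ≤ ((n : ℝ) - i + 1) ^ α * ((n : ℝ) - i + 1)⁻¹ * (i : ℝ)⁻¹ := by
        rw [rpow_sub_one hk.ne', div_eq_mul_inv]
        gcongr
        linarith [(j.cast_nonneg : (0 : ℝ) ≤ j)]
    _ ≤ (n : ℝ) ^ α * ((i : ℝ) * ((n : ℝ) - i + 1))⁻¹ := by
        rw [mul_assoc, ← mul_inv, mul_comm ((n : ℝ) - i + 1)]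
        gcongr
        linarith

/-- Kernel-summation estimate: Σ_{i=1}^n (n-i+1)^{α-1}(j+i)^{-1} ≤ c n^{α-1} log(n+1). -/
theorem kernel_sum_log_bound (α : ℝ) (hα : α ∈ Set.Ioo (0 : ℝ) 1) :
    ∃ c > 0, ∀ n : ℕ, 1 ≤ n → ∀ j : ℕ,
      ∑ i ∈ Finset.Icc 1 n, ((n : ℝ) - (i : ℝ) + 1) ^ (α - 1) * ((j : ℝ) + (i : ℝ))⁻¹ ≤
        c * (n : ℝ) ^ (α - 1) * Real.log ((n : ℝ) + 1) := by
  refine ⟨6, by norm_num, fun n hn j => ?_⟩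
  have hn0 : (0 : ℝ) < n := by exact_mod_cast hn
  have hH : (0 : ℝ) ≤ harmonic n := by exact_mod_cast (harmonic_pos (by omega)).le
  calc ∑ i ∈ Icc 1 n, ((n : ℝ) - i + 1) ^ (α - 1) * ((j : ℝ) + i)⁻¹
      ≤ (n : ℝ) ^ α * ∑ i ∈ Icc 1 n, ((i : ℝ) * ((n : ℝ) - i + 1))⁻¹ := by
        rw [mul_sum]
        exact sum_le_sum fun i hi => rpow_sub_one_mul_inv_le_rpow_mul_inv_mul hα.1.le hi j
    _ = 2 * ((n : ℝ) ^ α / (n + 1)) * harmonic n := by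
        rw [sum_Icc_inv_mul_reflect_eq_harmonic]; ring
    _ ≤ 2 * (n : ℝ) ^ (α - 1) * (3 * log (n + 1)) := by
        rw [rpow_sub_one hn0.ne']
        gcongr
        · linarith
        · exact harmonic_le_three_mul_log_add_one hn
    _ = 6 * (n : ℝ) ^ (α - 1) * log (n + 1) := by ring
end

section
/- For every α ∈ (0,1) and every integer N ≥ 1, Σ_{n=1}^N (N-n+1)^{-α} n^{α-1} ≤ B(α, 1-α), where B is the Beta function. -/
/-!
On `[k, k + 1]` the integrand `s ↦ (N - s) ^ (-α) * s ^ (α - 1)` is bounded below by its value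
`(N - k) ^ (-α) * (k + 1) ^ (α - 1)`, the `(k + 1)`-st summand, because the first factor
increases and the second decreases in `s`. Summing over `k < N` bounds the sum by
`∫₀ᴺ (N - s) ^ (-α) s ^ (α - 1) ds`, which the substitution `s = N t` turns into `B(α, 1 - α)`
since the exponents add up to `-1`.
-/

open MeasureTheory Set intervalIntegral

lemma intervalIntegrable_sub_rpow_mul_rpow {c p q : ℝ} (hc : 0 < c) (hp : -1 < p) (hq : -1 < q) :
    IntervalIntegrable (fun s : ℝ => (c - s) ^ p * s ^ q) volume 0 c := by
  have hleft : IntervalIntegrable (fun s : ℝ => (c - s) ^ p * s ^ q) volume 0 (c / 2) := by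
    refine (intervalIntegrable_rpow' hq).continuousOn_mul
      (ContinuousOn.rpow_const (by fun_prop) fun s hs => Or.inl ?_)
    rw [uIcc_of_le (by positivity)] at hs
    linarith [hs.2]
  have hright : IntervalIntegrable (fun s : ℝ => (c - s) ^ p * s ^ q) volume (c / 2) c := by
    have hsub : IntervalIntegrable (fun s : ℝ => (c - s) ^ p) volume (c / 2) c := by
      simpa [sub_half] using
        ((intervalIntegrable_rpow' hp (a := 0) (b := c / 2)).comp_sub_left c).symm
    refine hsub.mul_continuousOn (ContinuousOn.rpow_const continuousOn_id fun s hs => Or.inl ?_)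
    rw [uIcc_of_le (by linarith)] at hs
    exact (by linarith [hs.1] : (0 : ℝ) < s).ne'
  exact hleft.trans hright

lemma integral_sub_rpow_mul_rpow {c p q : ℝ} (hc : 0 < c) :
    ∫ s in (0 : ℝ)..c, (c - s) ^ p * s ^ q =
      c ^ (p + q + 1) * ∫ t in (0 : ℝ)..1, (1 - t) ^ p * t ^ q := by
  have hscale : ∀ s ∈ uIcc 0 c,
      (c - s) ^ p * s ^ q = c ^ p * c ^ q * ((1 - s / c) ^ p * (s / c) ^ q) := by
    intro s hs
    rw [uIcc_of_le hc.le] at hs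
    have hsc : s / c ≤ 1 := (div_le_one hc).2 hs.2
    rw [mul_mul_mul_comm, ← Real.mul_rpow hc.le (by linarith),
      ← Real.mul_rpow hc.le (div_nonneg hs.1 hc.le), mul_sub, mul_div_cancel₀ _ hc.ne', mul_one]
  rw [integral_congr hscale, intervalIntegral.integral_const_mul,
    integral_comp_div (fun t => (1 - t) ^ p * t ^ q) hc.ne', zero_div, div_self hc.ne',
    smul_eq_mul, Real.rpow_add hc, Real.rpow_add hc, Real.rpow_one]
  ring

lemma mul_sub_le_integral_sub_rpow_neg_mul_rpow {α a b c : ℝ} (hα0 : 0 ≤ α) (hα1 : α ≤ 1)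
    (ha : 0 ≤ a) (hab : a ≤ b) (hbc : b ≤ c)
    (hf : IntervalIntegrable (fun s => (c - s) ^ (-α) * s ^ (α - 1)) volume a b) :
    (c - a) ^ (-α) * b ^ (α - 1) * (b - a) ≤ ∫ s in a..b, (c - s) ^ (-α) * s ^ (α - 1) := by
  calc (c - a) ^ (-α) * b ^ (α - 1) * (b - a)
      = ∫ _ in a..b, (c - a) ^ (-α) * b ^ (α - 1) := by
        rw [intervalIntegral.integral_const, smul_eq_mul, mul_comm]
    _ ≤ ∫ s in a..b, (c - s) ^ (-α) * s ^ (α - 1) := by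
      refine integral_mono_on_of_le_Ioo hab intervalIntegrable_const hf fun s hs => ?_
      have hs0 : 0 < s := ha.trans_lt hs.1
      have hcs : 0 < c - s := by linarith [hs.2]
      exact mul_le_mul
        (Real.rpow_le_rpow_of_nonpos hcs (by linarith [hs.1]) (by linarith))
        (Real.rpow_le_rpow_of_nonpos hs0 hs.2.le (by linarith))
        (Real.rpow_nonneg (ha.trans hab) _) (Real.rpow_nonneg hcs.le _)

/-- The discrete convolution sum is bounded by the Beta function B(α, 1-α). -/
theorem sum_le_beta (α : ℝ) (hα : α ∈ Set.Ioo (0 : ℝ) 1) (N : ℕ) (hN : 1 ≤ N) :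
    ∑ n ∈ Finset.Icc 1 N, ((N : ℝ) - (n : ℝ) + 1) ^ (-α) * (n : ℝ) ^ (α - 1) ≤
      ∫ s in (0 : ℝ)..1, (1 - s) ^ (-α) * s ^ (α - 1) := by
  obtain ⟨hα0, hα1⟩ := hα
  have hNpos : (0 : ℝ) < N := by exact_mod_cast hN
  have hint := intervalIntegrable_sub_rpow_mul_rpow hNpos (by linarith : -1 < -α)
    (by linarith : -1 < α - 1)
  have hcell : ∀ k < N, IntervalIntegrable (fun s => ((N : ℝ) - s) ^ (-α) * s ^ (α - 1))
      volume k (k + 1) := by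
    intro k hk
    refine hint.mono_set (uIcc_subset_uIcc ?_ ?_) <;>
      rw [uIcc_of_le hNpos.le] <;> constructor <;> norm_cast <;> omega
  calc ∑ n ∈ Finset.Icc 1 N, ((N : ℝ) - (n : ℝ) + 1) ^ (-α) * (n : ℝ) ^ (α - 1)
      = ∑ k ∈ Finset.range N, ((N : ℝ) - k) ^ (-α) * ((k : ℝ) + 1) ^ (α - 1) := by
        rw [← Finset.Ico_add_one_right_eq_Icc, Finset.sum_Ico_eq_sum_range]
        refine Finset.sum_congr rfl fun k _ => ?_
        push_cast
        rw [show (N : ℝ) - (1 + k) + 1 = N - k by ring, add_comm 1]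
    _ ≤ ∑ k ∈ Finset.range N, ∫ s in (k : ℝ)..(k + 1), ((N : ℝ) - s) ^ (-α) * s ^ (α - 1) := by
        refine Finset.sum_le_sum fun k hk => ?_
        have hkN := Finset.mem_range.1 hk
        have hbound := mul_sub_le_integral_sub_rpow_neg_mul_rpow hα0.le hα1.le k.cast_nonneg
          (by linarith) (by norm_cast) (hcell k hkN)
        rwa [add_sub_cancel_left, mul_one] at hbound
    _ = ∫ s in (0 : ℝ)..N, ((N : ℝ) - s) ^ (-α) * s ^ (α - 1) := by
        simpa using sum_integral_adjacent_intervals (a := fun k : ℕ => (k : ℝ))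
          fun k hk => by exact_mod_cast hcell k hk
    _ = ∫ s in (0 : ℝ)..1, (1 - s) ^ (-α) * s ^ (α - 1) := by
        rw [integral_sub_rpow_mul_rpow hNpos, show -α + (α - 1) + 1 = 0 by ring,
          Real.rpow_zero, one_mul]
end
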